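/- For the one-hidden-layer linear CNN in VALID mode (requiring d ≥ d_1), the loss L(U, w_1,…,w_{p_1}) = (1/2)‖U F(W) X − Y‖_F², where F(W) vertically stacks f_V(w_1),…,f_V(w_{p_1}), has no spurious valleys whenever the number of channels satisfies p_1 ≥ d_1: there is no path-connected component T of a sublevel set {θ : L(θ) ≤ α} with inf_{θ∈T} L(θ) > inf L. -/

import Mathlib

open scoped BigOperators Matrix

/-- Squared Frobenius norm of a real matrix. -/
noncomputable def frobSq {m n : Type*} [Fintype m] [Fintype n] (M : Matrix m n ℝ) : ℝ :=
  ∑ i, ∑ j, (M i j) ^ 2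

/-- VALID-mode 1-D convolution matrix (stride 1) of a kernel `w ∈ ℝ^{d₁}`:
`(f_V(w))_{ij} = w_{j−i+1}` (1-indexed) when that index is in range, else `0`. -/
noncomputable def convValid (d : ℕ) {d₁ : ℕ} (w : Fin d₁ → ℝ) :
    Matrix (Fin (d - d₁ + 1)) (Fin d) ℝ :=
  Matrix.of fun i j =>
    if h : (i : ℕ) ≤ j ∧ (j : ℕ) < i + d₁ then w ⟨j - i, by omega⟩ else 0

namespace NSVaux

open Matrix Set Submodule

/-! ### Generic helpers -/

section seg
variable {E : Type*} [AddCommGroup E] [Module ℝ E] [TopologicalSpace E]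
  [ContinuousAdd E] [ContinuousSMul ℝ E]

lemma joinedIn_segment {S : Set E} {a b : E}
    (h : ∀ t : ℝ, 0 ≤ t → t ≤ 1 → (1 - t) • a + t • b ∈ S) : JoinedIn S a b := by
  refine ⟨⟨⟨fun t => (1 - (t : ℝ)) • a + (t : ℝ) • b, ?_⟩, ?_, ?_⟩, fun t => h t t.2.1 t.2.2⟩
  · exact ((continuous_const.sub continuous_subtype_val).smul continuous_const).add
      (continuous_subtype_val.smul continuous_const)
  · simp
  · simp

end seg

lemma sq_combo {a b t : ℝ} (h0 : 0 ≤ t) (h1 : t ≤ 1) :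
    ((1 - t) * a + t * b) ^ 2 ≤ (1 - t) * a ^ 2 + t * b ^ 2 := by
  nlinarith [mul_nonneg (mul_nonneg h0 (sub_nonneg.2 h1)) (sq_nonneg (a - b))]

lemma frobSq_combo {m n : Type*} [Fintype m] [Fintype n] (A B : Matrix m n ℝ) {t : ℝ}
    (h0 : 0 ≤ t) (h1 : t ≤ 1) :
    frobSq ((1 - t) • A + t • B) ≤ (1 - t) * frobSq A + t * frobSq B := by
  unfold frobSq
  rw [Finset.mul_sum, Finset.mul_sum, ← Finset.sum_add_distrib]
  refine Finset.sum_le_sum fun i _ => ?_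
  rw [Finset.mul_sum, Finset.mul_sum, ← Finset.sum_add_distrib]
  refine Finset.sum_le_sum fun j _ => ?_
  simpa [Matrix.add_apply, Matrix.smul_apply, smul_eq_mul] using
    sq_combo (a := A i j) (b := B i j) h0 h1

/-- Existence of a least-squares minimizer. -/
lemma exists_lsq {d n dy : ℕ} (X : Matrix (Fin d) (Fin n) ℝ) (Y : Matrix (Fin dy) (Fin n) ℝ) :
    ∃ Mstar : Matrix (Fin dy) (Fin d) ℝ, ∀ M : Matrix (Fin dy) (Fin d) ℝ, frobSq (Mstar * X - Y) ≤ frobSq (M * X - Y) := by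
  let e : Matrix (Fin dy) (Fin n) ℝ →ₗ[ℝ] EuclideanSpace ℝ (Fin dy × Fin n) :=
    { toFun := fun Z => WithLp.toLp 2 (fun p : Fin dy × Fin n => Z p.1 p.2)
      map_add' := fun _ _ => rfl
      map_smul' := fun _ _ => rfl }
  let ℓ : Matrix (Fin dy) (Fin d) ℝ →ₗ[ℝ] EuclideanSpace ℝ (Fin dy × Fin n) :=
    { toFun := fun M => e (M * X)
      map_add' := by intro A B; show e ((A + B) * X) = e (A * X) + e (B * X)
                     rw [Matrix.add_mul, map_add]
      map_smul' := by intro r A; show e ((r • A) * X) = r • e (A * X)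
                      rw [Matrix.smul_mul, _root_.map_smul] }
  have hfrob : ∀ Z : Matrix (Fin dy) (Fin n) ℝ, frobSq Z = ‖e Z‖ ^ 2 := by
    intro Z
    rw [EuclideanSpace.norm_eq, Real.sq_sqrt (by positivity)]
    rw [frobSq]
    rw [show (∑ i : Fin dy × Fin n, ‖e Z i‖ ^ 2) = ∑ i : Fin dy, ∑ j : Fin n, ‖e Z (i, j)‖ ^ 2
      from Fintype.sum_prod_type (f := fun p : Fin dy × Fin n => ‖e Z p‖ ^ 2)]
    simp [e, Real.norm_eq_abs, sq_abs]
    rfl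
  set V := LinearMap.range ℓ with hV
  set P : EuclideanSpace ℝ (Fin dy × Fin n) :=
    ((orthogonalProjection V (e Y) : V) : EuclideanSpace ℝ (Fin dy × Fin n)) with hP
  obtain ⟨Mstar, hMstar⟩ : ∃ M, ℓ M = P := (orthogonalProjection V (e Y)).2
  refine ⟨Mstar, fun M => ?_⟩
  have h1 : ∀ N : Matrix (Fin dy) (Fin d) ℝ, e (N * X - Y) = ℓ N - e Y := by
    intro N; rw [map_sub]; rfl
  rw [hfrob, hfrob, h1, h1, hMstar]
  have key : ‖e Y - P‖ ≤ ‖e Y - ℓ M‖ := by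
    rw [hP, show ((orthogonalProjection V (e Y) : V) : EuclideanSpace ℝ (Fin dy × Fin n)) = V.starProjection (e Y) from rfl, starProjection_minimal]
    exact ciInf_le ⟨0, fun x => by rintro ⟨u, rfl⟩; exact norm_nonneg _⟩
      (⟨ℓ M, LinearMap.mem_range_self ℓ M⟩ : V)
  rw [norm_sub_rev P, norm_sub_rev (ℓ M)]
  exact pow_le_pow_left₀ (norm_nonneg _) key 2

/-! ### Linear-algebra helpers -/

lemma exists_dep {d₁ p₁ : ℕ} (W : Fin p₁ → Fin d₁ → ℝ)
    (h : Module.finrank ℝ (Submodule.span ℝ (Set.range W)) < p₁) :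
    ∃ (c : Fin p₁) (lam : Fin p₁ → ℝ), lam c = 0 ∧ W c = ∑ c', lam c' • W c' := by
  have hnli : ¬ LinearIndependent ℝ W := by
    intro hli
    have := finrank_span_eq_card hli
    simp [Fintype.card_fin] at this
    omega
  rw [Fintype.linearIndependent_iff] at hnli
  push_neg at hnli
  obtain ⟨g, hg0, c, hgc⟩ := hnli
  refine ⟨c, fun c' => if c' = c then 0 else -(g c') / g c, if_pos rfl, ?_⟩
  have hcoef : ∀ c', g c • ((if c' = c then (0:ℝ) else -(g c') / g c) • W c')
      = (if c' = c then (0:ℝ) else -(g c')) • W c' := by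
    intro c'
    rw [smul_smul]
    congr 1
    by_cases h' : c' = c
    · simp [h']
    · simp only [if_neg h']
      field_simp
  have hA : ∑ c', (if c' = c then (0:ℝ) else g c') • W c' = -(g c • W c) := by
    have hsplit : ∀ c', (if c' = c then (0:ℝ) else g c') • W c'
        = g c' • W c' - (if c' = c then g c' • W c' else 0) := by
      intro c'
      by_cases h' : c' = c <;> simp [h']
    rw [Finset.sum_congr rfl fun c' _ => hsplit c', Finset.sum_sub_distrib, hg0,
      Finset.sum_ite_eq' Finset.univ c (fun c' => g c' • W c')]
    simp
  have hmain : g c • (∑ c', (if c' = c then (0:ℝ) else -(g c') / g c) • W c') = g c • W c := by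
    rw [Finset.smul_sum, Finset.sum_congr rfl fun c' _ => hcoef c']
    have : ∀ c', (if c' = c then (0:ℝ) else -(g c')) • W c'
        = -((if c' = c then (0:ℝ) else g c') • W c') := by
      intro c'
      by_cases h' : c' = c <;> simp [h']
    rw [Finset.sum_congr rfl fun c' _ => this c', Finset.sum_neg_distrib, hA, neg_neg]
  exact (smul_right_injective (Fin d₁ → ℝ) hgc hmain).symm

lemma exists_not_mem_span {d₁ p₁ : ℕ} (W : Fin p₁ → Fin d₁ → ℝ)
    (h : Module.finrank ℝ (Submodule.span ℝ (Set.range W)) < d₁) :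
    ∃ v, v ∉ Submodule.span ℝ (Set.range W) := by
  by_contra hc
  push_neg at hc
  have htop : Submodule.span ℝ (Set.range W) = ⊤ := Submodule.eq_top_iff'.2 hc
  rw [htop, finrank_top, Module.finrank_fin_fun] at h
  omega

lemma finrank_update_lt {d₁ p₁ : ℕ} (W : Fin p₁ → Fin d₁ → ℝ) (c : Fin p₁)
    (lam : Fin p₁ → ℝ) (hlc : lam c = 0) (hrep : W c = ∑ c', lam c' • W c')
    (v : Fin d₁ → ℝ) (hv : v ∉ Submodule.span ℝ (Set.range W)) :
    Module.finrank ℝ (Submodule.span ℝ (Set.range W))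
      < Module.finrank ℝ (Submodule.span ℝ (Set.range (Function.update W c v))) := by
  set W' := Function.update W c v with hW'
  have hle : Submodule.span ℝ (Set.range W) ≤ Submodule.span ℝ (Set.range W') := by
    rw [Submodule.span_le]
    rintro _ ⟨c', rfl⟩
    by_cases h : c' = c
    · subst h
      rw [hrep]
      refine Submodule.sum_mem _ fun c'' _ => ?_
      by_cases h2 : c'' = c'
      · rw [h2, hlc, zero_smul]; exact Submodule.zero_mem _
      · exact Submodule.smul_mem _ _
          (Submodule.subset_span ⟨c'', Function.update_of_ne h2 v W⟩)
    · exact Submodule.subset_span ⟨c', Function.update_of_ne h v W⟩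
  have hlt : Submodule.span ℝ (Set.range W) < Submodule.span ℝ (Set.range W') := by
    refine lt_of_le_of_ne hle fun he => hv ?_
    rw [he]
    exact Submodule.subset_span ⟨c, Function.update_self c v W⟩
  exact Submodule.finrank_lt_finrank_of_lt hlt

/-! ### The convolution structure -/

/-- The stacked convolution matrix `F(W)`. -/
noncomputable def FW (d : ℕ) {d₁ p₁ : ℕ} (W : Fin p₁ → Fin d₁ → ℝ) :
    Matrix (Fin p₁ × Fin (d - d₁ + 1)) (Fin d) ℝ :=
  Matrix.of fun ci j => convValid d (W ci.1) ci.2 j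

lemma convValid_apply (d : ℕ) {d₁ : ℕ} (w : Fin d₁ → ℝ) (i : Fin (d - d₁ + 1)) (j : Fin d) :
    convValid d w i j = if h : (i : ℕ) ≤ j ∧ (j : ℕ) < i + d₁ then w ⟨j - i, by omega⟩ else 0 :=
  rfl

lemma convValid_zero (d : ℕ) {d₁ : ℕ} (i : Fin (d - d₁ + 1)) (j : Fin d) :
    convValid d (fun _ : Fin d₁ => (0:ℝ)) i j = 0 := by
  rw [convValid_apply]
  split_ifs <;> rfl

lemma convValid_sum {ι : Type*} [Fintype ι] (d : ℕ) {d₁ : ℕ} (g : ι → ℝ) (w : ι → Fin d₁ → ℝ)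
    (i : Fin (d - d₁ + 1)) (j : Fin d) :
    convValid d (fun l => ∑ c, g c * w c l) i j = ∑ c, g c * convValid d (w c) i j := by
  simp only [convValid_apply]
  by_cases h : (i : ℕ) ≤ j ∧ (j : ℕ) < i + d₁
  · simp only [dif_pos h]
  · simp only [dif_neg h, mul_zero, Finset.sum_const_zero]

lemma mul_FW_apply {d d₁ dy p₁ : ℕ} (U : Fin dy → (Fin p₁ × Fin (d - d₁ + 1)) → ℝ)
    (W : Fin p₁ → Fin d₁ → ℝ) (i : Fin dy) (j : Fin d) :
    (Matrix.of U * FW d W) i j = ∑ c, ∑ k, U i (c, k) * convValid d (W c) k j := by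
  rw [Matrix.mul_apply, Fintype.sum_prod_type]
  rfl

lemma mul_FW_congr {d d₁ dy p₁ : ℕ} (U : Fin dy → (Fin p₁ × Fin (d - d₁ + 1)) → ℝ)
    (c : Fin p₁) (hU : ∀ i k, U i (c, k) = 0) (W₁ W₂ : Fin p₁ → Fin d₁ → ℝ)
    (hW : ∀ c', c' ≠ c → W₂ c' = W₁ c') :
    Matrix.of U * FW d W₂ = Matrix.of U * FW d W₁ := by
  ext i j
  rw [mul_FW_apply, mul_FW_apply]
  refine Finset.sum_congr rfl fun c' _ => ?_
  by_cases hc : c' = c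
  · subst hc; simp [hU]
  · rw [hW c' hc]

lemma mul_FW_transfer {d d₁ dy p₁ : ℕ} (U : Fin dy → (Fin p₁ × Fin (d - d₁ + 1)) → ℝ)
    (W : Fin p₁ → Fin d₁ → ℝ) (c : Fin p₁) (lam : Fin p₁ → ℝ) (hlc : lam c = 0)
    (hrep : W c = ∑ c', lam c' • W c') :
    Matrix.of (fun i (ck : Fin p₁ × Fin (d - d₁ + 1)) =>
      (if ck.1 = c then (-1 : ℝ) else lam ck.1) * U i (c, ck.2)) * FW d W = 0 := by
  ext i j
  rw [mul_FW_apply]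
  simp only [Matrix.zero_apply]
  rw [Finset.sum_comm]
  refine Finset.sum_eq_zero fun k _ => ?_
  show (∑ c' : Fin p₁, (if c' = c then (-1 : ℝ) else lam c') * U i (c, k)
      * convValid d (W c') k j) = 0
  have hker : (fun l => ∑ c', (if c' = c then (-1 : ℝ) else lam c') * W c' l)
      = fun _ : Fin d₁ => (0:ℝ) := by
    funext l
    have hWl : W c l = ∑ c', lam c' * W c' l := by
      have := congrFun hrep l
      simpa [Finset.sum_apply] using this
    have hsplit : ∀ c', (if c' = c then (-1 : ℝ) else lam c') * W c' l
        = lam c' * W c' l - (if c' = c then W c l else 0) := by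
      intro c'
      by_cases h' : c' = c
      · subst h'; simp [hlc]
      · simp [h']
    rw [Finset.sum_congr rfl fun c' _ => hsplit c', Finset.sum_sub_distrib,
      Finset.sum_ite_eq' Finset.univ c (fun _ => W c l), ← hWl]
    simp
  have hpull : (∑ c' : Fin p₁, (if c' = c then (-1 : ℝ) else lam c') * U i (c, k)
      * convValid d (W c') k j)
      = U i (c, k) * ∑ c', (if c' = c then (-1 : ℝ) else lam c') * convValid d (W c') k j := by
    rw [Finset.mul_sum]
    exact Finset.sum_congr rfl fun c' _ => by ring
  rw [hpull, ← convValid_sum, hker, convValid_zero, mul_zero]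

lemma exists_factor {d d₁ dy p₁ : ℕ} (hd1 : 1 ≤ d₁) (hd : d₁ ≤ d)
    (W : Fin p₁ → Fin d₁ → ℝ) (hspan : Submodule.span ℝ (Set.range W) = ⊤)
    (M : Matrix (Fin dy) (Fin d) ℝ) :
    ∃ C : Fin dy → (Fin p₁ × Fin (d - d₁ + 1)) → ℝ, Matrix.of C * FW d W = M := by
  have hmem : ∀ l : Fin d₁, ∃ g : Fin p₁ → ℝ, ∑ c, g c • W c = Pi.single l (1:ℝ) := by
    intro l
    exact (mem_span_range_iff_exists_fun ℝ).1 (hspan ▸ Submodule.mem_top)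
  choose lam hlam using hmem
  have hl0 : ∀ j : Fin d, (j : ℕ) - min (j : ℕ) (d - d₁) < d₁ := by
    intro j
    have := j.isLt
    omega
  set R : Fin d → (Fin p₁ × Fin (d - d₁ + 1)) → ℝ := fun j ck =>
    if (ck.2 : ℕ) = min (j : ℕ) (d - d₁) then lam ⟨(j : ℕ) - min (j : ℕ) (d - d₁), hl0 j⟩ ck.1
    else 0 with hR
  have hRF : Matrix.of R * FW d W = 1 := by
    ext j j'
    rw [mul_FW_apply]
    have hi : min (j : ℕ) (d - d₁) < d - d₁ + 1 := by
      have := j.isLt; omega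
    set i₀ : Fin (d - d₁ + 1) := ⟨min (j : ℕ) (d - d₁), hi⟩ with hi₀
    set l₀ : Fin d₁ := ⟨(j : ℕ) - min (j : ℕ) (d - d₁), hl0 j⟩ with hl₀
    have hcollapse : ∀ c : Fin p₁,
        ∑ k, R j (c, k) * convValid d (W c) k j' = lam l₀ c * convValid d (W c) i₀ j' := by
      intro c
      rw [Finset.sum_eq_single i₀]
      · simp [hR, hi₀, hl₀]
      · intro k _ hk
        have : ¬ ((k : ℕ) = min (j : ℕ) (d - d₁)) := by
          intro hkk
          apply hk
          apply Fin.ext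
          simpa [hi₀] using hkk
        simp [hR, this]
      · intro hmem'
        exact absurd (Finset.mem_univ i₀) hmem'
    rw [Finset.sum_congr rfl fun c _ => hcollapse c, ← convValid_sum]
    have hker : (fun l => ∑ c, lam l₀ c * W c l) = Pi.single l₀ (1:ℝ) := by
      funext l
      have := congrFun (hlam l₀) l
      simpa [Finset.sum_apply] using this
    rw [hker]
    rw [convValid_apply, Matrix.one_apply]
    have hi₀v : (i₀ : ℕ) = min (j : ℕ) (d - d₁) := rfl
    have hl₀v : (l₀ : ℕ) = (j : ℕ) - min (j : ℕ) (d - d₁) := rfl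
    have hj := j.isLt
    have hj' := j'.isLt
    by_cases hcond : (i₀ : ℕ) ≤ (j' : ℕ) ∧ (j' : ℕ) < (i₀ : ℕ) + d₁
    · rw [dif_pos hcond, Pi.single_apply]
      by_cases heq : j = j'
      · subst heq
        have h1 : (⟨(j : ℕ) - (i₀ : ℕ), by omega⟩ : Fin d₁) = l₀ := by
          apply Fin.ext
          show (j : ℕ) - (i₀ : ℕ) = (l₀ : ℕ)
          omega
        simp [h1]
      · have hnej : (j : ℕ) ≠ (j' : ℕ) := fun hcc => heq (Fin.ext hcc)
        have h1 : (⟨(j' : ℕ) - (i₀ : ℕ), by omega⟩ : Fin d₁) ≠ l₀ := by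
          intro hc
          have hv : (j' : ℕ) - (i₀ : ℕ) = (l₀ : ℕ) := congrArg Fin.val hc
          omega
        rw [if_neg h1, if_neg heq]
    · rw [dif_neg hcond]
      have hne : j ≠ j' := by
        intro hc
        subst hc
        exact hcond ⟨by omega, by omega⟩
      rw [if_neg hne]
  refine ⟨(M * Matrix.of R : Matrix (Fin dy) (Fin p₁ × Fin (d - d₁ + 1)) ℝ), ?_⟩
  have : Matrix.of ((M * Matrix.of R : Matrix (Fin dy) (Fin p₁ × Fin (d - d₁ + 1)) ℝ) :
      Fin dy → (Fin p₁ × Fin (d - d₁ + 1)) → ℝ) = M * Matrix.of R := rfl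
  rw [this, Matrix.mul_assoc, hRF, Matrix.mul_one]

/-! ### The loss function and the main path argument -/

/-- The CNN loss. -/
noncomputable def L0 (d d₁ n dy p₁ : ℕ) (X : Matrix (Fin d) (Fin n) ℝ)
    (Y : Matrix (Fin dy) (Fin n) ℝ)
    (θ : (Fin dy → (Fin p₁ × Fin (d - d₁ + 1)) → ℝ) × (Fin p₁ → Fin d₁ → ℝ)) : ℝ :=
  (1 / 2) * frobSq (Matrix.of θ.1 * FW d θ.2 * X - Y)

lemma reach_base {d d₁ n dy p₁ : ℕ} (hd1 : 1 ≤ d₁) (hd : d₁ ≤ d)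
    (X : Matrix (Fin d) (Fin n) ℝ) (Y : Matrix (Fin dy) (Fin n) ℝ) (α : ℝ)
    (Mstar : Matrix (Fin dy) (Fin d) ℝ)
    (hstar : ∀ M, frobSq (Mstar * X - Y) ≤ frobSq (M * X - Y))
    (U : Fin dy → (Fin p₁ × Fin (d - d₁ + 1)) → ℝ) (W : Fin p₁ → Fin d₁ → ℝ)
    (hUW : L0 d d₁ n dy p₁ X Y (U, W) ≤ α)
    (hfull : d₁ ≤ Module.finrank ℝ (Submodule.span ℝ (Set.range W))) :
    ∃ θ', JoinedIn {θ | L0 d d₁ n dy p₁ X Y θ ≤ α} (U, W) θ' ∧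
      L0 d d₁ n dy p₁ X Y θ' ≤ (1 / 2) * frobSq (Mstar * X - Y) := by
  have hspan : Submodule.span ℝ (Set.range W) = ⊤ := by
    have h1 := Submodule.finrank_le (Submodule.span ℝ (Set.range W))
    rw [Module.finrank_fin_fun] at h1
    apply Submodule.eq_top_of_finrank_eq
    rw [Module.finrank_fin_fun]
    omega
  obtain ⟨C, hC⟩ := exists_factor hd1 hd W hspan Mstar
  have hCloss : L0 d d₁ n dy p₁ X Y (C, W) = (1 / 2) * frobSq (Mstar * X - Y) := by
    show (1 / 2) * frobSq (Matrix.of C * FW d W * X - Y) = _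
    rw [hC]
  refine ⟨(C, W), ?_, le_of_eq hCloss⟩
  apply joinedIn_segment
  intro t ht0 ht1
  have hpt : (1 - t) • ((U, W) : (Fin dy → (Fin p₁ × Fin (d - d₁ + 1)) → ℝ) ×
        (Fin p₁ → Fin d₁ → ℝ)) + t • ((C, W)) = ((1 - t) • U + t • C, W) := by
    show ((1 - t) • U + t • C, (1 - t) • W + t • W) = _
    have h2 : (1 - t) • W + t • W = W := by rw [← add_smul]; norm_num
    rw [h2]
  rw [hpt]
  show (1 / 2) * frobSq (Matrix.of ((1 - t) • U + t • C) * FW d W * X - Y) ≤ α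
  have hmat : Matrix.of ((1 - t) • U + t • C) * FW d W * X - Y
      = (1 - t) • (Matrix.of U * FW d W * X - Y) + t • (Matrix.of C * FW d W * X - Y) := by
    have h3 : Matrix.of ((1 - t) • U + t • C) = (1 - t) • Matrix.of U + t • Matrix.of C := rfl
    rw [h3, Matrix.add_mul, Matrix.smul_mul, Matrix.smul_mul, Matrix.add_mul,
      Matrix.smul_mul, Matrix.smul_mul]
    ext i j
    simp only [Matrix.sub_apply, Matrix.add_apply, Matrix.smul_apply, smul_eq_mul]
    ring
  rw [hmat]
  have hBA : frobSq (Matrix.of C * FW d W * X - Y) ≤ frobSq (Matrix.of U * FW d W * X - Y) := by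
    rw [hC]; exact hstar _
  have hcomb := frobSq_combo (Matrix.of U * FW d W * X - Y) (Matrix.of C * FW d W * X - Y) ht0 ht1
  have hUW' : (1 / 2) * frobSq (Matrix.of U * FW d W * X - Y) ≤ α := hUW
  nlinarith [mul_nonneg ht0 (sub_nonneg.2 hBA)]

lemma reach {d d₁ n dy p₁ : ℕ} (hd1 : 1 ≤ d₁) (hd : d₁ ≤ d) (hp : d₁ ≤ p₁)
    (X : Matrix (Fin d) (Fin n) ℝ) (Y : Matrix (Fin dy) (Fin n) ℝ) (α : ℝ)
    (Mstar : Matrix (Fin dy) (Fin d) ℝ)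
    (hstar : ∀ M, frobSq (Mstar * X - Y) ≤ frobSq (M * X - Y)) :
    ∀ (k : ℕ) (U : Fin dy → (Fin p₁ × Fin (d - d₁ + 1)) → ℝ) (W : Fin p₁ → Fin d₁ → ℝ),
      L0 d d₁ n dy p₁ X Y (U, W) ≤ α →
      d₁ ≤ k + Module.finrank ℝ (Submodule.span ℝ (Set.range W)) →
      ∃ θ', JoinedIn {θ | L0 d d₁ n dy p₁ X Y θ ≤ α} (U, W) θ' ∧
        L0 d d₁ n dy p₁ X Y θ' ≤ (1 / 2) * frobSq (Mstar * X - Y) := by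
  intro k
  induction k with
  | zero =>
    intro U W hUW hrank
    exact reach_base hd1 hd X Y α Mstar hstar U W hUW (by omega)
  | succ k ih =>
    intro U W hUW hrank
    by_cases hfull : d₁ ≤ Module.finrank ℝ (Submodule.span ℝ (Set.range W))
    · exact reach_base hd1 hd X Y α Mstar hstar U W hUW hfull
    · push_neg at hfull
      obtain ⟨c, lam, hlc, hrep⟩ := exists_dep W (lt_of_lt_of_le hfull hp)
      obtain ⟨v, hv⟩ := exists_not_mem_span W hfull
      set D : Fin dy → (Fin p₁ × Fin (d - d₁ + 1)) → ℝ :=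
        fun i ck => (if ck.1 = c then (-1 : ℝ) else lam ck.1) * U i (c, ck.2) with hD
      have hD0 : Matrix.of D * FW d W = 0 := mul_FW_transfer U W c lam hlc hrep
      set U' : Fin dy → (Fin p₁ × Fin (d - d₁ + 1)) → ℝ := U + D with hU'
      have hU'c : ∀ i k', U' i (c, k') = 0 := by
        intro i k'
        show U i (c, k') + (if ((c, k') : Fin p₁ × Fin (d - d₁ + 1)).1 = c then (-1 : ℝ)
          else lam ((c, k') : Fin p₁ × Fin (d - d₁ + 1)).1) * U i (c, ((c, k')).2) = 0
        rw [if_pos rfl]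
        ring
      have hprod : ∀ s : ℝ, Matrix.of (U + s • D) * FW d W = Matrix.of U * FW d W := by
        intro s
        have h3 : Matrix.of (U + s • D) = Matrix.of U + s • Matrix.of D := rfl
        rw [h3, Matrix.add_mul, Matrix.smul_mul, hD0, smul_zero, add_zero]
      have hseg1 : JoinedIn {θ | L0 d d₁ n dy p₁ X Y θ ≤ α} (U, W) (U', W) := by
        apply joinedIn_segment
        intro t ht0 ht1
        have hpt : (1 - t) • ((U, W) : (Fin dy → (Fin p₁ × Fin (d - d₁ + 1)) → ℝ) ×
            (Fin p₁ → Fin d₁ → ℝ)) + t • ((U', W)) = (U + t • D, W) := by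
          show ((1 - t) • U + t • U', (1 - t) • W + t • W) = _
          have h2 : (1 - t) • W + t • W = W := by rw [← add_smul]; norm_num
          have h1 : (1 - t) • U + t • U' = U + t • D := by
            rw [hU']
            module
          rw [h1, h2]
        rw [hpt]
        show (1 / 2) * frobSq (Matrix.of (U + t • D) * FW d W * X - Y) ≤ α
        rw [hprod t]
        exact hUW
      have hL0U' : L0 d d₁ n dy p₁ X Y (U', W) = L0 d d₁ n dy p₁ X Y (U, W) := by
        show (1 / 2) * frobSq (Matrix.of (U + D) * FW d W * X - Y)
          = (1 / 2) * frobSq (Matrix.of U * FW d W * X - Y)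
        have h4 := hprod 1
        rw [one_smul] at h4
        rw [h4]
      set W' := Function.update W c v with hW'
      have hWcongr : ∀ W₂ : Fin p₁ → Fin d₁ → ℝ, (∀ c', c' ≠ c → W₂ c' = W c') →
          Matrix.of U' * FW d W₂ = Matrix.of U' * FW d W :=
        fun W₂ h => mul_FW_congr U' c hU'c W W₂ h
      have hseg2 : JoinedIn {θ | L0 d d₁ n dy p₁ X Y θ ≤ α} (U', W) (U', W') := by
        apply joinedIn_segment
        intro t ht0 ht1
        have hpt : (1 - t) • ((U', W) : (Fin dy → (Fin p₁ × Fin (d - d₁ + 1)) → ℝ) ×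
            (Fin p₁ → Fin d₁ → ℝ)) + t • ((U', W')) = (U', (1 - t) • W + t • W') := by
          show ((1 - t) • U' + t • U', (1 - t) • W + t • W') = _
          have h1 : (1 - t) • U' + t • U' = U' := by rw [← add_smul]; norm_num
          rw [h1]
        rw [hpt]
        show (1 / 2) * frobSq (Matrix.of U' * FW d ((1 - t) • W + t • W') * X - Y) ≤ α
        rw [hWcongr ((1 - t) • W + t • W') (fun c' hc' => ?_)]
        · have h5 : Matrix.of U' * FW d W = Matrix.of U * FW d W := by
            have h4 := hprod 1
            rw [one_smul] at h4
            exact h4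
          rw [h5]
          exact hUW
        · show (1 - t) • W c' + t • W' c' = W c'
          rw [hW', Function.update_of_ne hc' v W, ← add_smul]
          norm_num
      have hL0W' : L0 d d₁ n dy p₁ X Y (U', W') = L0 d d₁ n dy p₁ X Y (U, W) := by
        show (1 / 2) * frobSq (Matrix.of U' * FW d W' * X - Y) = _
        rw [hWcongr W' (fun c' hc' => Function.update_of_ne hc' v W)]
        exact hL0U'
      have hrank' : Module.finrank ℝ (Submodule.span ℝ (Set.range W))
          < Module.finrank ℝ (Submodule.span ℝ (Set.range W')) := by
        rw [hW']
        exact finrank_update_lt W c lam hlc hrep v hv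
      obtain ⟨θ', hjoin, hval⟩ := ih U' W' (by rw [hL0W']; exact hUW) (by omega)
      exact ⟨θ', (hseg1.trans hseg2).trans hjoin, hval⟩

end NSVaux

open NSVaux in
/-- The one-hidden-layer linear CNN in VALID mode (with `d ≥ d₁`),
`L(U, w₁,…,w_{p₁}) = (1/2)‖U F(W) X − Y‖_F²`, has no spurious valleys whenever the number of
channels satisfies `p₁ ≥ d₁`. -/
theorem linear_cnn_valid_no_spurious_valleys
    (d d₁ n dy p₁ : ℕ) (hd : d₁ ≤ d) (hp : d₁ ≤ p₁)
    (X : Matrix (Fin d) (Fin n) ℝ) (Y : Matrix (Fin dy) (Fin n) ℝ)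
    (L : ((Fin dy → (Fin p₁ × Fin (d - d₁ + 1)) → ℝ) × (Fin p₁ → Fin d₁ → ℝ)) → ℝ)
    (hL : ∀ θ, L θ = (1 / 2) * frobSq
      (Matrix.of θ.1 *
        Matrix.of (fun (ci : Fin p₁ × Fin (d - d₁ + 1)) (j : Fin d) =>
          convValid d (θ.2 ci.1) ci.2 j) * X - Y)) :
    ∀ (α : ℝ) θ0, L θ0 ≤ α →
      ¬ (⨅ θ, L θ) < sInf (L '' pathComponentIn {θ | L θ ≤ α} θ0) := by
  have hLL0 : L = L0 d d₁ n dy p₁ X Y := funext fun θ => by rw [hL θ]; rfl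
  subst hLL0
  intro α θ0 hθ0
  rcases Nat.eq_zero_or_pos d₁ with hd10 | hd1
  · -- degenerate case : the loss is constant
    subst hd10
    have hconst : ∀ θ, L0 d 0 n dy p₁ X Y θ = L0 d 0 n dy p₁ X Y θ0 := by
      have hzero : ∀ (U : Fin dy → (Fin p₁ × Fin (d - 0 + 1)) → ℝ) (W : Fin p₁ → Fin 0 → ℝ),
          Matrix.of U * FW d W = 0 := by
        intro U W
        ext i j
        rw [mul_FW_apply, Matrix.zero_apply]
        refine Finset.sum_eq_zero fun c _ => Finset.sum_eq_zero fun k _ => ?_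
        rw [convValid_apply, dif_neg (by omega), mul_zero]
      intro θ
      show (1 / 2) * frobSq (Matrix.of θ.1 * FW d θ.2 * X - Y)
        = (1 / 2) * frobSq (Matrix.of θ0.1 * FW d θ0.2 * X - Y)
      rw [hzero θ.1 θ.2, hzero θ0.1 θ0.2]
    have hmemθ0 : θ0 ∈ pathComponentIn {θ | L0 d 0 n dy p₁ X Y θ ≤ α} θ0 :=
      mem_pathComponentIn_self hθ0
    have h1 : (⨅ θ, L0 d 0 n dy p₁ X Y θ) = L0 d 0 n dy p₁ X Y θ0 := by
      rw [show (L0 d 0 n dy p₁ X Y) = fun _ => L0 d 0 n dy p₁ X Y θ0 from funext hconst]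
      exact ciInf_const
    have h2 : sInf (L0 d 0 n dy p₁ X Y '' pathComponentIn {θ | L0 d 0 n dy p₁ X Y θ ≤ α} θ0)
        = L0 d 0 n dy p₁ X Y θ0 := by
      apply le_antisymm
      · exact csInf_le ⟨L0 d 0 n dy p₁ X Y θ0, by rintro x ⟨θ, _, rfl⟩; rw [hconst θ]⟩
          ⟨θ0, hmemθ0, rfl⟩
      · exact le_csInf ⟨L0 d 0 n dy p₁ X Y θ0, ⟨θ0, hmemθ0, rfl⟩⟩
          (by rintro x ⟨θ, _, rfl⟩; rw [hconst θ])
    rw [h1, h2]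
    exact lt_irrefl _
  · obtain ⟨Mstar, hstar⟩ := exists_lsq X Y
    have hmin : ∀ θ, (1 / 2) * frobSq (Mstar * X - Y) ≤ L0 d d₁ n dy p₁ X Y θ := by
      intro θ
      show _ ≤ (1 / 2) * frobSq (Matrix.of θ.1 * FW d θ.2 * X - Y)
      have : frobSq (Mstar * X - Y) ≤ frobSq (Matrix.of θ.1 * FW d θ.2 * X - Y) := hstar _
      linarith
    obtain ⟨θ', hjoin, hval⟩ := reach hd1 hd hp X Y α Mstar hstar d₁ θ0.1 θ0.2
      (by rw [Prod.mk.eta]; exact hθ0) (Nat.le_add_right d₁ _)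
    rw [Prod.mk.eta] at hjoin
    have hmem : θ' ∈ pathComponentIn {θ | L0 d d₁ n dy p₁ X Y θ ≤ α} θ0 := hjoin
    have h3 : sInf (L0 d d₁ n dy p₁ X Y '' pathComponentIn {θ | L0 d d₁ n dy p₁ X Y θ ≤ α} θ0)
        ≤ L0 d d₁ n dy p₁ X Y θ' :=
      csInf_le ⟨(1 / 2) * frobSq (Mstar * X - Y), by rintro x ⟨θ, _, rfl⟩; exact hmin θ⟩
        ⟨θ', hmem, rfl⟩
    have h4 : (1 / 2) * frobSq (Mstar * X - Y) ≤ ⨅ θ, L0 d d₁ n dy p₁ X Y θ := le_ciInf hmin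
    exact not_lt.2 (le_trans h3 (le_trans hval h4))
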